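/- arXiv:quant-ph/0502068 — 7 statements merged into one kernel-verified Lean document; each statement's English description precedes it below -/
import Mathlib

section
/- For n > 1, the epigraph of f_n, i.e. the set {(z,w) ∈ [0,1]×[0,1] : w ≥ f_n(z)}, is convex, where f_n(z) = √(1 - ((1-β_n²)/√α_n)·√z) for z ∈ [0, α_n] and f_n(z) = (β_n/(1-α_n))(1-z) for z ∈ [α_n, 1]. -/
/-!
On `[0, α]` the curve `z ↦ √(1 - c √z)` is convex as long as `c √z ≤ 2/3`: its derivative is
`-c / (4 √(z (1 - c √z)))`, and `t² - c t³` increases for `c t ≤ 2/3`. With `c = (1 - β²)/√α` this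
bound is `β² ≥ 1/3`. The line on `[α, 1]` is tangent to the curve at `α`, so the glued function has
a monotone derivative on `(0, 1)` and is convex, and its epigraph within the unit square is convex.
-/

open Real Set

theorem HasDerivWithinAt.hasDerivAt_ite_le {f g : ℝ → ℝ} {m d : ℝ}
    (hf : HasDerivWithinAt f d (Iic m) m) (hg : HasDerivWithinAt g d (Ici m) m)
    (hfg : f m = g m) : HasDerivAt (fun x => if x ≤ m then f x else g x) d m := by
  have hle : HasDerivWithinAt (fun x => if x ≤ m then f x else g x) d (Iic m) m :=
    hf.congr (fun x hx => if_pos hx) (if_pos le_rfl)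
  have hge : HasDerivWithinAt (fun x => if x ≤ m then f x else g x) d (Ici m) m := by
    refine hg.congr (fun x hx => ?_) (by simp [hfg])
    rcases (mem_Ici.1 hx).eq_or_lt with rfl | hlt
    · simp [hfg]
    · simp [not_le.2 hlt]
  simpa [Iic_union_Ici, hasDerivWithinAt_univ] using hle.union hge

theorem MonotoneOn.ite_le {a b m : ℝ} {f g : ℝ → ℝ} (hf : MonotoneOn f (Ioc a m))
    (hg : MonotoneOn g (Ico m b)) (hfg : f m ≤ g m) :
    MonotoneOn (fun x => if x ≤ m then f x else g x) (Ioo a b) := by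
  rintro x ⟨hax, hxb⟩ y ⟨hay, hyb⟩ hxy
  by_cases hym : y ≤ m
  · simpa [hxy.trans hym, hym] using hf ⟨hax, hxy.trans hym⟩ ⟨hay, hym⟩ hxy
  by_cases hxm : x ≤ m
  · have hmy : m < y := not_le.1 hym
    simp only [hxm, hym, if_true, if_false]
    calc f x ≤ f m := hf ⟨hax, hxm⟩ ⟨hax.trans_le hxm, le_rfl⟩ hxm
      _ ≤ g m := hfg
      _ ≤ g y := hg ⟨le_rfl, hmy.trans hyb⟩ ⟨hmy.le, hyb⟩ hmy.le
  · simpa [hxm, hym] using hg ⟨(not_le.1 hxm).le, hxb⟩ ⟨(not_le.1 hxm).le.trans hxy, hyb⟩ hxy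

theorem convexOn_Icc_ite_le {a b m : ℝ} {f g f' g' : ℝ → ℝ}
    (hfc : ContinuousOn f (Iic m)) (hgc : ContinuousOn g (Ici m))
    (hf : ∀ x ∈ Ioc a m, HasDerivAt f (f' x) x) (hg : ∀ x ∈ Ico m b, HasDerivAt g (g' x) x)
    (hf' : MonotoneOn f' (Ioc a m)) (hg' : MonotoneOn g' (Ico m b))
    (hfg : f m = g m) (hfg' : f' m = g' m) :
    ConvexOn ℝ (Icc a b) (fun x => if x ≤ m then f x else g x) := by
  set G := fun x => if x ≤ m then f x else g x
  set G' := fun x => if x ≤ m then f' x else g' x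
  have hG : ∀ x ∈ Ioo a b, HasDerivAt G (G' x) x := by
    rintro x ⟨hax, hxb⟩
    rcases lt_trichotomy x m with hxm | rfl | hmx
    · refine ((hf x ⟨hax, hxm.le⟩).congr_of_eventuallyEq ?_).congr_deriv (if_pos hxm.le).symm
      filter_upwards [Iio_mem_nhds hxm] with z hz using if_pos (le_of_lt hz)
    · simp only [G', le_refl, if_true]
      exact (hf x ⟨hax, le_rfl⟩).hasDerivWithinAt.hasDerivAt_ite_le
        (hfg' ▸ (hg x ⟨le_rfl, hxb⟩).hasDerivWithinAt) hfg
    · refine ((hg x ⟨hmx.le, hxb⟩).congr_of_eventuallyEq ?_).congr_deriv (if_neg hmx.not_ge).symm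
      filter_upwards [Ioi_mem_nhds hmx] with z hz using if_neg (not_le.2 hz)
  have hGc : Continuous G :=
    continuous_if_le continuous_id continuous_const hfc hgc (fun x hx => hx ▸ hfg)
  refine MonotoneOn.convexOn_of_deriv (convex_Icc a b) hGc.continuousOn ?_ ?_ <;>
    rw [interior_Icc]
  · exact fun x hx => (hG x hx).differentiableAt.differentiableWithinAt
  · intro x hx y hy hxy
    rw [(hG x hx).deriv, (hG y hy).deriv]
    exact hf'.ite_le hg' hfg'.le hx hy hxy

theorem ConvexOn.convex_epigraph_inter {𝕜 E β : Type*} [Semiring 𝕜] [PartialOrder 𝕜]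
    [AddCommMonoid E] [AddCommMonoid β] [PartialOrder β] [IsOrderedAddMonoid β]
    [Module 𝕜 E] [Module 𝕜 β] [PosSMulMono 𝕜 β] {s : Set E} {t : Set β} {f : E → β}
    (hf : ConvexOn 𝕜 s f) (ht : Convex 𝕜 t) :
    Convex 𝕜 {p : E × β | p.1 ∈ s ∧ p.2 ∈ t ∧ f p.1 ≤ p.2} := by
  convert hf.convex_epigraph.inter (convex_univ.prod ht) using 1
  ext p
  simp only [mem_ofPred_eq, mem_inter_iff, mem_prod, mem_univ, true_and]
  tauto

theorem hasDerivAt_sqrt_one_sub_mul_sqrt {c x : ℝ} (hx : 0 < x) (hcx : c * √x < 1) :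
    HasDerivAt (fun z => √(1 - c * √z)) (-c / (4 * √(x * (1 - c * √x)))) x := by
  have hinner : HasDerivAt (fun z => 1 - c * √z) (-(c * (1 / (2 * √x)))) x :=
    ((hasDerivAt_sqrt hx.ne').const_mul c).const_sub 1
  refine ((hasDerivAt_sqrt (sub_pos.2 hcx).ne').comp x hinner).congr_deriv ?_
  have hsx : 0 < √x := sqrt_pos.2 hx
  have hs1 : 0 < √(1 - c * √x) := sqrt_pos.2 (sub_pos.2 hcx)
  rw [sqrt_mul hx.le]
  field_simp
  ring

theorem monotoneOn_mul_one_sub_mul_sqrt {c m : ℝ} (hc : 0 ≤ c) (hcm : c * √m ≤ 2 / 3) :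
    MonotoneOn (fun x => x * (1 - c * √x)) (Icc 0 m) := by
  rintro x ⟨hx0, -⟩ y ⟨hy0, hym⟩ hxy
  obtain ⟨s, hs0, rfl⟩ : ∃ s, 0 ≤ s ∧ s ^ 2 = x := ⟨√x, sqrt_nonneg x, sq_sqrt hx0⟩
  obtain ⟨t, ht0, rfl⟩ : ∃ t, 0 ≤ t ∧ t ^ 2 = y := ⟨√y, sqrt_nonneg y, sq_sqrt hy0⟩
  have hst : s ≤ t := (pow_le_pow_iff_left₀ hs0 ht0 two_ne_zero).1 hxy
  have hct : c * t ≤ 2 / 3 :=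
    (mul_le_mul_of_nonneg_left (by simpa [sqrt_sq ht0] using sqrt_le_sqrt hym) hc).trans hcm
  have hcs : c * s ≤ 2 / 3 := (mul_le_mul_of_nonneg_left hst hc).trans hct
  have hbracket : 0 ≤ t + s - c * (t ^ 2 + t * s + s ^ 2) := by
    nlinarith [mul_le_mul_of_nonneg_right hct ht0, mul_le_mul_of_nonneg_right hct hs0,
      mul_le_mul_of_nonneg_right hcs hs0]
  simp only [sqrt_sq hs0, sqrt_sq ht0]
  rw [← sub_nonneg]
  calc 0 ≤ (t - s) * (t + s - c * (t ^ 2 + t * s + s ^ 2)) :=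
        mul_nonneg (sub_nonneg.2 hst) hbracket
    _ = t ^ 2 * (1 - c * t) - s ^ 2 * (1 - c * s) := by ring

theorem monotoneOn_deriv_sqrt_one_sub_mul_sqrt {c m : ℝ} (hc : 0 ≤ c) (hcm : c * √m ≤ 2 / 3) :
    MonotoneOn (fun x => -c / (4 * √(x * (1 - c * √x)))) (Ioc 0 m) := by
  have hpos : ∀ x ∈ Ioc 0 m, 0 < x * (1 - c * √x) := fun x ⟨hx0, hxm⟩ =>
    mul_pos hx0 (by nlinarith [mul_le_mul_of_nonneg_left (sqrt_le_sqrt hxm) hc])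
  intro x hx y hy hxy
  simp only [neg_div, neg_le_neg_iff]
  refine div_le_div_of_nonneg_left hc (by positivity [sqrt_pos.2 (hpos x hx)]) ?_
  exact mul_le_mul_of_nonneg_left (sqrt_le_sqrt <| monotoneOn_mul_one_sub_mul_sqrt hc hcm
    (Ioc_subset_Icc_self hx) (Ioc_subset_Icc_self hy) hxy) zero_le_four

-- `(1 - β²)(1 - α) = 4αβ²` is the condition for the line to be tangent to the curve at `α`.
theorem convexOn_ite_sqrt_tangent_line {α β : ℝ} (hα0 : 0 < α) (hα1 : α < 1) (hβ0 : 0 < β)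
    (hβ : 1 / 3 ≤ β ^ 2) (htangent : (1 - β ^ 2) * (1 - α) = 4 * α * β ^ 2) :
    ConvexOn ℝ (Icc 0 1) (fun z => if z ≤ α then √(1 - (1 - β ^ 2) / √α * √z)
      else β / (1 - α) * (1 - z)) := by
  set c := (1 - β ^ 2) / √α
  have hsα : 0 < √α := sqrt_pos.2 hα0
  have h1α : 0 < 1 - α := sub_pos.2 hα1
  have hcα : c * √α = 1 - β ^ 2 := div_mul_cancel₀ _ hsα.ne'
  have hc : 0 ≤ c := div_nonneg (by nlinarith [mul_pos (mul_pos hα0 hβ0) hβ0]) hsα.le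
  have hcm : c * √α ≤ 2 / 3 := by linarith
  have hcurve_α : √(α * (1 - c * √α)) = √α * β := by
    rw [hcα, sub_sub_cancel, sqrt_mul hα0.le, sqrt_sq hβ0.le]
  refine convexOn_Icc_ite_le (f' := fun x => -c / (4 * √(x * (1 - c * √x))))
    (g' := fun _ => -(β / (1 - α))) (by fun_prop) (by fun_prop)
    (fun x hx => hasDerivAt_sqrt_one_sub_mul_sqrt hx.1 ?_)
    (fun x _ => by simpa using ((hasDerivAt_id x).const_sub 1).const_mul (β / (1 - α)))
    (monotoneOn_deriv_sqrt_one_sub_mul_sqrt hc hcm) monotoneOn_const ?_ ?_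
  · nlinarith [mul_le_mul_of_nonneg_left (sqrt_le_sqrt hx.2) hc]
  · rw [hcα, sub_sub_cancel, sqrt_sq hβ0.le, div_mul_cancel₀ _ h1α.ne']
  · simp only [hcurve_α, neg_div, neg_inj]
    rw [div_eq_div_iff (by positivity) h1α.ne']
    refine mul_right_cancel₀ hsα.ne' ?_
    rw [mul_right_comm, hcα, htangent]
    linear_combination (-4 * β ^ 2) * mul_self_sqrt hα0.le

theorem stmt_3 (n : ℕ) (hn : 1 < n)
    (α β : ℝ)
    (hα : α = ((n : ℝ) - 1) / (3 * ((n : ℝ) + 1)))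
    (hβ : β = Real.sqrt (((n : ℝ) + 2) / (3 * (n : ℝ))))
    (f : ℝ → ℝ)
    (hf : ∀ z, f z = if z ≤ α then Real.sqrt (1 - ((1 - β ^ 2) / Real.sqrt α) * Real.sqrt z)
                     else (β / (1 - α)) * (1 - z)) :
    Convex ℝ {p : ℝ × ℝ | p.1 ∈ Set.Icc (0:ℝ) 1 ∧ p.2 ∈ Set.Icc (0:ℝ) 1 ∧ f p.1 ≤ p.2} := by
  have hn' : (2 : ℝ) ≤ n := by exact_mod_cast hn
  have hβ2 : β ^ 2 = (n + 2) / (3 * n) := by rw [hβ, sq_sqrt (by positivity)]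
  obtain rfl : f = _ := funext hf
  refine (convexOn_ite_sqrt_tangent_line ?_ ?_ ?_ ?_ ?_).convex_epigraph_inter (convex_Icc 0 1)
  · rw [hα]; apply div_pos <;> linarith
  · rw [hα, div_lt_one (by linarith)]; linarith
  · rw [hβ]; positivity
  · rw [hβ2, le_div_iff₀ (by positivity)]; linarith
  · rw [hβ2, hα]; field_simp; ring
end

section
/- For all integers n ≥ 1, with α_n = (n-1)/(3(n+1)), β_n = √((n+2)/(3n)), α_{n+1} = n/(3(n+2)), β_{n+1} = √((n+3)/(3(n+1))), the inequality g_n(β_n²) ≥ f_{n+1}(β_n²) holds, where g_n(β_n²) = √α_n and f_{n+1}(β_n²) = β_{n+1}(1-β_n²)/(1-α_{n+1}); precisely, (f_{n+1}(β_n²)/g_n(β_n²))² - 1 = -4/(n²(n+3)) ≤ 0. -/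
open Real

theorem stmt_5 (n : ℕ) (hn : 2 ≤ n)
    (α β α' β' g f : ℝ)
    (hα : α = ((n : ℝ) - 1) / (3 * ((n : ℝ) + 1)))
    (hβ : β = Real.sqrt (((n : ℝ) + 2) / (3 * (n : ℝ))))
    (hα' : α' = (n : ℝ) / (3 * ((n : ℝ) + 2)))
    (hβ' : β' = Real.sqrt (((n : ℝ) + 3) / (3 * ((n : ℝ) + 1))))
    (hg : g = Real.sqrt α)
    (hf : f = β' * (1 - β ^ 2) / (1 - α')) :
    (f / g) ^ 2 - 1 = -4 / ((n : ℝ) ^ 2 * ((n : ℝ) + 3)) ∧ f ≤ g := by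
  have hN : (2:ℝ) ≤ (n:ℝ) := by exact_mod_cast hn
  set N : ℝ := (n:ℝ) with hNdef
  have h1 : (0:ℝ) < N := by linarith
  have hβ2 : β ^ 2 = (N + 2) / (3 * N) := by
    rw [hβ, sq_sqrt]
    positivity
  have hβ'2 : β' ^ 2 = (N + 3) / (3 * (N + 1)) := by
    rw [hβ', sq_sqrt]
    positivity
  have hαpos : 0 < α := by
    rw [hα]
    apply div_pos <;> linarith
  have hg2 : g ^ 2 = α := by rw [hg, sq_sqrt hαpos.le]
  have hgpos : 0 < g := by rw [hg]; exact Real.sqrt_pos.mpr hαpos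
  have hα'lt : 1 - α' > 0 := by
    rw [hα']
    have : N / (3 * (N + 2)) < 1 := by
      rw [div_lt_one (by linarith)]; linarith
    linarith
  have hfnn : 0 ≤ f := by
    rw [hf]
    apply div_nonneg _ hα'lt.le
    apply mul_nonneg (by rw [hβ']; positivity)
    rw [hβ2]
    have : (N + 2) / (3 * N) ≤ 1 := by
      rw [div_le_one (by linarith)]; linarith
    linarith
  have hf2 : f ^ 2 = β' ^ 2 * (1 - β ^ 2) ^ 2 / (1 - α') ^ 2 := by
    rw [hf, div_pow, mul_pow]
  have h2 : (0:ℝ) < N + 1 := by linarith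
  have h3 : (0:ℝ) < N + 2 := by linarith
  have h4 : (0:ℝ) < N + 3 := by linarith
  have hb : 1 - β ^ 2 = 2 * (N - 1) / (3 * N) := by
    rw [hβ2]; field_simp; ring
  have ha : 1 - α' = 2 * (N + 3) / (3 * (N + 2)) := by
    rw [hα']; field_simp; ring
  have hf2v : f ^ 2 = (N - 1) ^ 2 * (N + 2) ^ 2 / (3 * (N + 1) * (N ^ 2 * (N + 3))) := by
    rw [hf2, hβ'2, hb, ha]
    field_simp
  have key : (f / g) ^ 2 - 1 = -4 / (N ^ 2 * (N + 3)) := by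
    rw [div_pow, hf2v, hg2, hα]
    have h5 : N - 1 ≠ 0 := by linarith
    field_simp
    ring
  refine ⟨key, ?_⟩
  have hD : (0:ℝ) < N ^ 2 * (N + 3) := by positivity
  have hle1 : (f / g) ^ 2 ≤ 1 := by
    have : -4 / (N ^ 2 * (N + 3)) ≤ 0 :=
      div_nonpos_of_nonpos_of_nonneg (by norm_num) hD.le
    linarith [key]
  have hsq : f ^ 2 ≤ g ^ 2 := by
    have := (div_le_one (by positivity : (0:ℝ) < g ^ 2)).mp (by
      calc f ^ 2 / g ^ 2 = (f / g) ^ 2 := by ring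
        _ ≤ 1 := hle1)
    linarith
  nlinarith [hsq, hfnn, hgpos]
end

section
/- The function f_∞ : [0,1] → [0,1] defined by f_∞(z) = √(1 - (2/√3)√z) for z ∈ [0,1/3] and f_∞(z) = (√3/2)(1-z) for z ∈ [1/3,1] satisfies the symmetry: for all a ∈ [0,1], if b = f_∞(a)² then a = f_∞(b)². -/
/-! The two branches of `f_∞²` are mutually inverse bijections between `[0, 1/3]` and `[1/3, 1]`:
for `z ≤ 1/3` we have `f_∞(z)² = 1 - c √z` with `c = 2/√3`, and for `w ≥ 1/3` we have
`f_∞(w)² = (3/4)(1 - w)²`; since `c² = 4/3`, composing the two in either order gives the identity.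
Both formulas agree at `z = 1/3`, where `f_∞² = 1/3`. -/

open Real

noncomputable def fInfty (z : ℝ) : ℝ :=
  if z ≤ 1 / 3 then √(1 - 2 / √3 * √z) else √3 / 2 * (1 - z)

lemma two_div_sqrt_three_mul_sqrt_sq {z : ℝ} (hz : 0 ≤ z) : (2 / √3 * √z) ^ 2 = 4 / 3 * z := by
  rw [mul_pow, div_pow, sq_sqrt (by norm_num), sq_sqrt hz]
  ring

lemma two_div_sqrt_three_mul_sqrt_three_div_two : 2 / √3 * (√3 / 2) = 1 := by
  field_simp

lemma two_div_sqrt_three_mul_sqrt_le {z : ℝ} (hz : 0 ≤ z) (hz3 : z ≤ 1 / 3) :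
    2 / √3 * √z ≤ 2 / 3 := by
  rw [← sq_le_sq₀ (by positivity) (by norm_num), two_div_sqrt_three_mul_sqrt_sq hz]
  linarith

lemma fInfty_sq_of_le {z : ℝ} (hz : 0 ≤ z) (hz3 : z ≤ 1 / 3) :
    fInfty z ^ 2 = 1 - 2 / √3 * √z := by
  have hle := two_div_sqrt_three_mul_sqrt_le hz hz3
  rw [fInfty, if_pos hz3, sq_sqrt (by linarith)]

lemma fInfty_sq_of_ge {z : ℝ} (hz3 : 1 / 3 ≤ z) : fInfty z ^ 2 = 3 / 4 * (1 - z) ^ 2 := by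
  rcases hz3.lt_or_eq with hlt | rfl
  · rw [fInfty, if_neg hlt.not_ge, mul_pow, div_pow, sq_sqrt (by norm_num)]
    ring
  · rw [fInfty_sq_of_le (by norm_num) le_rfl, sqrt_div' _ (by norm_num : (0 : ℝ) ≤ 3),
      sqrt_one, div_mul_div_comm, mul_self_sqrt (by norm_num)]
    norm_num

theorem fInfty_sq_fInfty_sq {a : ℝ} (ha : a ∈ Set.Icc (0 : ℝ) 1) :
    fInfty (fInfty a ^ 2) ^ 2 = a := by
  obtain ⟨ha0, ha1⟩ := ha
  rcases le_total a (1 / 3) with ha3 | ha3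
  · have hle := two_div_sqrt_three_mul_sqrt_le ha0 ha3
    rw [fInfty_sq_of_le ha0 ha3, fInfty_sq_of_ge (by linarith), sub_sub_cancel,
      two_div_sqrt_three_mul_sqrt_sq ha0]
    ring
  · have hb : 3 / 4 * (1 - a) ^ 2 = (√3 / 2 * (1 - a)) ^ 2 := by
      rw [mul_pow, div_pow, sq_sqrt (by norm_num)]
      ring
    have hb3 : 3 / 4 * (1 - a) ^ 2 ≤ 1 / 3 := by nlinarith
    rw [fInfty_sq_of_ge ha3, fInfty_sq_of_le (by positivity) hb3, hb,
      sqrt_sq (mul_nonneg (by positivity) (by linarith)), ← mul_assoc,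
      two_div_sqrt_three_mul_sqrt_three_div_two, one_mul]
    ring

theorem stmt_6 (f : ℝ → ℝ)
    (hf : ∀ z, f z = if z ≤ 1 / 3 then Real.sqrt (1 - (2 / Real.sqrt 3) * Real.sqrt z)
                     else (Real.sqrt 3 / 2) * (1 - z)) :
    ∀ a ∈ Set.Icc (0:ℝ) 1, ∀ b, b = (f a) ^ 2 → a = (f b) ^ 2 := by
  obtain rfl : f = fInfty := funext hf
  rintro a ha b rfl
  exact (fInfty_sq_fInfty_sq ha).symm
end

section
/- If a ∈ [0,1/3] and b ≥ f_∞(a)² = 1 - (2/√3)√a, then b ≥ 1 - 2√(a/3) ≥ 1/3. -/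
open Real

theorem stmt_9 (a b : ℝ) (ha : a ∈ Set.Icc (0:ℝ) (1/3))
    (hb : 1 - (2 / Real.sqrt 3) * Real.sqrt a ≤ b) :
    1 - 2 * Real.sqrt (a / 3) ≤ b ∧ (1:ℝ) / 3 ≤ 1 - 2 * Real.sqrt (a / 3) := by
  obtain ⟨ha0, ha1⟩ := ha
  have h3 : Real.sqrt 3 ≠ 0 := by positivity
  have key : Real.sqrt (a / 3) = Real.sqrt a / Real.sqrt 3 := Real.sqrt_div ha0 3
  constructor
  · calc 1 - 2 * Real.sqrt (a / 3) = 1 - (2 / Real.sqrt 3) * Real.sqrt a := by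
          rw [key]; ring
      _ ≤ b := hb
  · have : Real.sqrt (a / 3) ≤ Real.sqrt (1 / 9) := by
      apply Real.sqrt_le_sqrt; linarith
    rw [show (1:ℝ)/9 = (1/3)^2 by norm_num, Real.sqrt_sq (by norm_num)] at this
    linarith
end

section
/- Define sequences A_n, B_n, H_n by A_1 = 2/3, B_1 = H_1 = 1/3, and for n ≥ 2 with γ_n = n/(n+2): A_n = γ_n B_{n-1}² + (1-γ_n), B_n = γ_n √(A_{n-1}), H_n = γ_n (1 - H_{n-1}). Then for all n ≥ 1: A_n = (n+3)/(3(n+1)), B_n = √(n/(3(n+2))), and H_n = n/(2(n+1)) if n is even, H_n = (n+1)/(2(n+2)) if n is odd. -/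
/-! Each closed form satisfies its recurrence, so the theorem follows by induction on `n`. For `B`
the point is `(n+1)/(n+3) · √((n+3)/(3(n+1))) = √((n+1)/(3(n+3)))`; for `H` the recurrence
exchanges the two parity branches of the closed form. -/

open Real

namespace CoinGame

noncomputable def aClosed (n : ℕ) : ℝ := ((n : ℝ) + 3) / (3 * ((n : ℝ) + 1))

noncomputable def bClosed (n : ℕ) : ℝ := Real.sqrt ((n : ℝ) / (3 * ((n : ℝ) + 2)))

noncomputable def hClosed (n : ℕ) : ℝ :=
  if Even n then (n : ℝ) / (2 * ((n : ℝ) + 1)) else ((n : ℝ) + 1) / (2 * ((n : ℝ) + 2))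

theorem aClosed_one : aClosed 1 = 2 / 3 := by norm_num [aClosed]

theorem bClosed_one : bClosed 1 = 1 / 3 := by
  rw [bClosed, show ((1 : ℕ) : ℝ) / (3 * ((1 : ℕ) + 2)) = (1 / 3) ^ 2 by norm_num]
  exact Real.sqrt_sq (by norm_num)

theorem hClosed_one : hClosed 1 = 1 / 3 := by norm_num [hClosed]

theorem bClosed_sq (n : ℕ) : bClosed n ^ 2 = (n : ℝ) / (3 * ((n : ℝ) + 2)) :=
  Real.sq_sqrt (by positivity)

theorem aClosed_succ (n : ℕ) :
    aClosed (n + 1) = ((↑(n + 1) : ℝ) / ((↑(n + 1) : ℝ) + 2)) * bClosed n ^ 2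
      + (1 - (↑(n + 1) : ℝ) / ((↑(n + 1) : ℝ) + 2)) := by
  rw [bClosed_sq, aClosed]
  push_cast
  field_simp
  ring

theorem bClosed_succ (n : ℕ) :
    bClosed (n + 1) = ((↑(n + 1) : ℝ) / ((↑(n + 1) : ℝ) + 2)) * Real.sqrt (aClosed n) := by
  have hγ : (0 : ℝ) ≤ (↑(n + 1) : ℝ) / ((↑(n + 1) : ℝ) + 2) := by positivity
  rw [← Real.sqrt_sq hγ, ← Real.sqrt_mul (sq_nonneg _), bClosed, aClosed]
  congr 1
  push_cast
  field_simp
  ring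

theorem hClosed_succ (n : ℕ) :
    hClosed (n + 1) = ((↑(n + 1) : ℝ) / ((↑(n + 1) : ℝ) + 2)) * (1 - hClosed n) := by
  rcases Nat.even_or_odd n with hn | hn
  · rw [hClosed, hClosed, if_pos hn, if_neg (Nat.not_even_iff_odd.mpr hn.add_one)]
    push_cast
    field_simp
    ring
  · rw [hClosed, hClosed, if_neg (Nat.not_even_iff_odd.mpr hn), if_pos hn.add_one]
    push_cast
    field_simp
    ring

end CoinGame

open CoinGame

theorem stmt_10 (A B H : ℕ → ℝ)
    (hA1 : A 1 = 2 / 3) (hB1 : B 1 = 1 / 3) (hH1 : H 1 = 1 / 3)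
    (hA : ∀ n, 2 ≤ n → A n = ((n : ℝ) / ((n : ℝ) + 2)) * (B (n - 1)) ^ 2 + (1 - (n : ℝ) / ((n : ℝ) + 2)))
    (hB : ∀ n, 2 ≤ n → B n = ((n : ℝ) / ((n : ℝ) + 2)) * Real.sqrt (A (n - 1)))
    (hH : ∀ n, 2 ≤ n → H n = ((n : ℝ) / ((n : ℝ) + 2)) * (1 - H (n - 1))) :
    ∀ n, 1 ≤ n →
      A n = ((n : ℝ) + 3) / (3 * ((n : ℝ) + 1)) ∧
      B n = Real.sqrt ((n : ℝ) / (3 * ((n : ℝ) + 2))) ∧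
      H n = (if Even n then (n : ℝ) / (2 * ((n : ℝ) + 1)) else ((n : ℝ) + 1) / (2 * ((n : ℝ) + 2))) := by
  intro n hn
  change A n = aClosed n ∧ B n = bClosed n ∧ H n = hClosed n
  induction n, hn using Nat.le_induction with
  | base => exact ⟨hA1.trans aClosed_one.symm, hB1.trans bClosed_one.symm, hH1.trans hClosed_one.symm⟩
  | succ n hn ih =>
    obtain ⟨ihA, ihB, ihH⟩ := ih
    have h2 : 2 ≤ n + 1 := Nat.succ_le_succ hn
    refine ⟨?_, ?_, ?_⟩
    · rw [hA _ h2, Nat.add_sub_cancel, ihB, aClosed_succ]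
    · rw [hB _ h2, Nat.add_sub_cancel, ihA, bClosed_succ]
    · rw [hH _ h2, Nat.add_sub_cancel, ihH, hClosed_succ]
end

section
/- The set Λ_2 of points (A_r, B_r) achievable by 2-Coin-Games is the convex hull of the curve {(t², √(1-t)) : t ∈ [0,1]}, where for a depth-2 tree with root value γ and level-1 values, the achievable points are exactly convex combinations (with weight γ) of pairs of points of the form (B², √A) with (A,B) ∈ Λ_1 = {(s, 1-s) : s ∈ [0,1]}. -/
/-!
The map `(A, B) ↦ (B², √A)` sends `Λ₁` onto the curve `C`, so `Λ₂` is the union of the chords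
of `C`, and it remains to see that every point `p` of the convex hull of the compact connected
set `C` lies on a chord. If it lies on none, then no two of the directions `z - p`, `z ∈ C`,
are opposite. Measuring these directions by `arg` relative to one of them, connectedness forces
them into an arc of length `< π`, so an open half-plane through `p` contains `C` and hence its
convex hull, a contradiction.
-/

open Real Complex Set

theorem LinearMap.zero_notMem_convexHull_of_forall_pos {E : Type*} [AddCommGroup E] [Module ℝ E]
    (ℓ : E →ₗ[ℝ] ℝ) {s : Set E} (h : ∀ x ∈ s, 0 < ℓ x) : (0 : E) ∉ convexHull ℝ s := fun h0 => by
  have : (0 : ℝ) < ℓ 0 := convexHull_min h (convex_halfSpace_gt ℓ.isLinear 0) h0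
  simp at this

namespace Complex

lemma zero_mem_segment_of_div_notMem_slitPlane {z w : ℂ} (hz : z ≠ 0) (h : w / z ∉ slitPlane) :
    (0 : ℂ) ∈ segment ℝ z w := by
  rw [mem_slitPlane_iff] at h
  push Not at h
  have hr : ((w / z).re : ℂ) = w / z := Complex.ext rfl (by simp [h.2])
  have hw : w = (w / z).re • z := by rw [real_smul, hr, div_mul_cancel₀ w hz]
  rw [mem_segment_iff_sameRay, zero_sub, sub_zero, hw, ← neg_smul_neg]
  exact SameRay.sameRay_nonneg_smul_right (-z) (neg_nonneg.mpr h.1)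

lemma div_notMem_slitPlane_of_arg_eq_add_pi {z w : ℂ} (hz : z ≠ 0) (hw : w ≠ 0)
    (h : arg w = arg z + π) : w / z ∉ slitPlane := by
  have : arg (w / z) = π := by
    rw [← Real.Angle.toReal_pi, ← arg_coe_angle_eq_iff_eq_toReal, arg_div_coe_angle hw hz, h]
    simp
  simp [mem_slitPlane_iff_arg, this]

lemma re_div_pos_of_abs_arg_sub_lt {z z₀ : ℂ} {c : ℝ} (hz : z / z₀ ≠ 0)
    (h : |arg (z / z₀) - c| < π / 2) : 0 < (z / (z₀ * exp (c * I))).re := by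
  have hpolar : z / (z₀ * exp (c * I)) = ‖z / z₀‖ * exp ((arg (z / z₀) - c : ℝ) * I) := by
    rw [← div_div]
    conv_lhs => rw [← norm_mul_exp_arg_mul_I (z / z₀)]
    rw [mul_div_assoc, ← exp_sub]
    push_cast; ring_nf
  rw [hpolar, re_ofReal_mul, exp_ofReal_mul_I_re]
  exact mul_pos (norm_pos_iff.mpr hz) (cos_pos_of_mem_Ioo (abs_lt.mp h))

theorem exists_zero_mem_segment_of_zero_mem_convexHull {K : Set ℂ} (hKc : IsCompact K)
    (hK : IsConnected K) (h0 : (0 : ℂ) ∈ convexHull ℝ K) :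
    ∃ a ∈ K, ∃ b ∈ K, (0 : ℂ) ∈ segment ℝ a b := by
  by_contra! hseg
  have hne : ∀ z ∈ K, z ≠ 0 := fun z hz h => hseg z hz z hz (by simp [h])
  have hslit : ∀ z ∈ K, ∀ w ∈ K, w / z ∈ slitPlane := fun z hz w hw =>
    of_not_not fun h => hseg z hz w hw (zero_mem_segment_of_div_notMem_slitPlane (hne z hz) h)
  obtain ⟨z₀, hz₀⟩ := hK.nonempty
  set θ : ℂ → ℝ := fun z => arg (z / z₀)
  have hθ : ContinuousOn θ K := fun z hz =>
    ((continuousAt_arg (hslit z₀ hz₀ z hz)).comp (f := (· / z₀))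
      (continuous_id.div_const z₀).continuousAt).continuousWithinAt
  obtain ⟨zM, hzM, hM⟩ := hKc.exists_isMaxOn hK.nonempty hθ
  obtain ⟨zm, hzm, hm⟩ := hKc.exists_isMinOn hK.nonempty hθ
  have hspread : θ zM - θ zm < π := by
    by_contra! h
    obtain ⟨w, hw, hθw⟩ := hK.isPreconnected.intermediate_value hzm hzM hθ
      (show θ zm + π ∈ Icc (θ zm) (θ zM) from ⟨by linarith [pi_pos], by linarith⟩)
    have hz₀' := hne z₀ hz₀
    refine div_notMem_slitPlane_of_arg_eq_add_pi (div_ne_zero (hne zm hzm) hz₀')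
      (div_ne_zero (hne w hw) hz₀') hθw ?_
    rw [div_div_div_cancel_right₀ hz₀']
    exact hslit zm hzm w hw
  -- `u` points along the bisector of the arc of directions of `K`.
  set u := z₀ * exp (((θ zm + θ zM) / 2 : ℝ) * I)
  have hpos : ∀ z ∈ K, 0 < (z / u).re := fun z hz =>
    re_div_pos_of_abs_arg_sub_lt (div_ne_zero (hne z hz) (hne z₀ hz₀))
      (abs_lt.mpr ⟨by linarith [isMinOn_iff.mp hm z hz], by linarith [isMaxOn_iff.mp hM z hz]⟩)
  exact (reLm ∘ₗ LinearMap.mulRight ℝ u⁻¹).zero_notMem_convexHull_of_forall_pos hpos h0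

end Complex

theorem exists_mem_segment_of_mem_convexHull {K : Set (ℝ × ℝ)} (hKc : IsCompact K)
    (hK : IsConnected K) {p : ℝ × ℝ} (hp : p ∈ convexHull ℝ K) :
    ∃ a ∈ K, ∃ b ∈ K, p ∈ segment ℝ a b := by
  let e : ℝ × ℝ ≃ᵃ[ℝ] ℂ :=
    (AffineEquiv.vaddConst ℝ p).symm.trans equivRealProdLm.symm.toAffineEquiv
  let f : ℝ × ℝ →ᵃ[ℝ] ℂ := e
  have hf : Continuous f := f.continuous_of_finiteDimensional
  have hfp : f p = 0 := by simp [f, e]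
  obtain ⟨_, ⟨a, ha, rfl⟩, _, ⟨b, hb, rfl⟩, hab⟩ :=
    Complex.exists_zero_mem_segment_of_zero_mem_convexHull (hKc.image hf)
      (hK.image f hf.continuousOn)
      (by rw [← hfp, ← f.image_convexHull]; exact mem_image_of_mem f hp)
  rw [← image_segment, ← hfp] at hab
  obtain ⟨x, hx, hxp⟩ := hab
  exact ⟨a, ha, b, hb, e.injective hxp ▸ hx⟩

theorem stmt_18
    (Λ₁ : Set (ℝ × ℝ))
    (hΛ₁ : Λ₁ = {p : ℝ × ℝ | ∃ s ∈ Set.Icc (0:ℝ) 1, p = (s, 1 - s)})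
    (Λ₂ : Set (ℝ × ℝ))
    (hΛ₂ : Λ₂ = {p : ℝ × ℝ | ∃ γ ∈ Set.Icc (0:ℝ) 1, ∃ q ∈ Λ₁, ∃ q' ∈ Λ₁,
      p = (γ * q.2 ^ 2 + (1 - γ) * q'.2 ^ 2,
           γ * Real.sqrt q.1 + (1 - γ) * Real.sqrt q'.1)}) :
    Λ₂ = convexHull ℝ {p : ℝ × ℝ | ∃ t ∈ Set.Icc (0:ℝ) 1, p = (t ^ 2, Real.sqrt (1 - t))} := by
  subst hΛ₁ hΛ₂
  set C := {p : ℝ × ℝ | ∃ t ∈ Set.Icc (0:ℝ) 1, p = (t ^ 2, Real.sqrt (1 - t))}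
  have hC : (fun t : ℝ => (t ^ 2, √(1 - t))) '' Icc 0 1 = C := by ext; simp [C, eq_comm]
  have hcont : Continuous fun t : ℝ => (t ^ 2, √(1 - t)) := by fun_prop
  have hsC : ∀ s ∈ Icc (0 : ℝ) 1, ((1 - s) ^ 2, √s) ∈ C := fun s hs =>
    ⟨1 - s, Icc.mem_iff_one_sub_mem.mp hs, by simp⟩
  ext p
  constructor
  · rintro ⟨γ, hγ, _, ⟨s, hs, rfl⟩, _, ⟨s', hs', rfl⟩, rfl⟩
    convert convex_convexHull ℝ C (subset_convexHull ℝ C (hsC s hs))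
      (subset_convexHull ℝ C (hsC s' hs')) hγ.1 (sub_nonneg.2 hγ.2) (add_sub_cancel _ _) using 1
    ext <;> simp
  · intro hp
    obtain ⟨_, ⟨t, ht, rfl⟩, _, ⟨u, hu, rfl⟩, γ, δ, hγ, hδ, hγδ, rfl⟩ :=
      exists_mem_segment_of_mem_convexHull (hC ▸ isCompact_Icc.image hcont)
        (hC ▸ (isConnected_Icc zero_le_one).image _ hcont.continuousOn) hp
    obtain rfl : δ = 1 - γ := by linarith
    refine ⟨γ, ⟨hγ, by linarith⟩, (1 - t, t), ⟨1 - t, Icc.mem_iff_one_sub_mem.mp ht, by simp⟩,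
      (1 - u, u), ⟨1 - u, Icc.mem_iff_one_sub_mem.mp hu, by simp⟩, ?_⟩
    ext <;> simp
end

section
/- Let H, L : ℝ → ℝ solve dH/dL = -(H+L)/(2H) with H > 0, L ≥ 0. Then the quantity log(H² + (1/2)LH + (1/2)L²) + (2/√7)·arctan(√7·L/(4H+L)) is constant along solutions. Consequently, the solution with H(0) = 1 satisfies, at the point where H = L = L₀ > 0, log(2L₀²) = -(2/√7)·arctan(√7/5), i.e. 2L₀² = exp(-(2/√7)·arctan(√7/5)) ≈ 0.692181687. -/
/-! Writing `P = H² + LH/2 + L²/2 = (H + L/4)² + 7L²/16`, one has `1 + (√7 L/(4H + L))² = 16P/(4H + L)²`,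
so the arctan term differentiates to `(H - L H')/(2P)` and the whole quantity to `(2 H H' + H + L)/P`,
which the ODE makes vanish. Evaluating the conserved quantity at `(H, L) = (1, 0)`, where it is `0`,
and at `H = L = L₀` gives the value of `log (2 L₀²)`. -/

open Real Set

noncomputable def firstIntegral (h x : ℝ) : ℝ :=
  log (h ^ 2 + (1/2) * x * h + (1/2) * x ^ 2) + (2 / √7) * arctan (√7 * x / (4 * h + x))

lemma quadratic_pos_of_four_mul_add_ne_zero {h x : ℝ} (hx : 4 * h + x ≠ 0) : 0 < h ^ 2 + (1/2) * x * h + (1/2) * x ^ 2 := by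
  rcases eq_or_ne x 0 with rfl | hx0
  · have : h ≠ 0 := by simpa using hx
    norm_num
    positivity
  · have hsq : h ^ 2 + (1/2) * x * h + (1/2) * x ^ 2 = (h + x / 4) ^ 2 + 7 / 16 * x ^ 2 := by ring
    rw [hsq]
    positivity

lemma hasDerivAt_firstIntegral {H : ℝ → ℝ} {h' x : ℝ} (hH : HasDerivAt H h' x)
    (hx : 4 * H x + x ≠ 0) :
    HasDerivAt (fun y => firstIntegral (H y) y)
      ((2 * H x * h' + H x + x) / (H x ^ 2 + (1/2) * x * H x + (1/2) * x ^ 2)) x := by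
  have hP := quadratic_pos_of_four_mul_add_ne_zero hx
  have hquad : HasDerivAt (fun y => H y ^ 2 + (1/2) * y * H y + (1/2) * y ^ 2)
      (2 * H x * h' + (1/2) * H x + (1/2) * x * h' + x) x :=
    (((hH.pow 2).add (((hasDerivAt_id x).const_mul (1/2)).mul hH)).add
      ((hasDerivAt_pow 2 x).const_mul (1/2))).congr_deriv (by simp only [id]; ring)
  have hratio : HasDerivAt (fun y => √7 * y / (4 * H y + y))
      (4 * √7 * (H x - x * h') / (4 * H x + x) ^ 2) x :=
    (((hasDerivAt_id x).const_mul √7).div ((hH.const_mul 4).add (hasDerivAt_id x)) hx).congr_deriv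
      (by simp only [id, Pi.add_apply]; field_simp; ring)
  have harctan : 1 + (√7 * x / (4 * H x + x)) ^ 2
      = 16 * (H x ^ 2 + (1/2) * x * H x + (1/2) * x ^ 2) / (4 * H x + x) ^ 2 := by
    rw [div_pow, mul_pow, sq_sqrt (by norm_num)]
    field_simp
    ring
  refine ((hquad.log hP.ne').add (hratio.arctan.const_mul (2 / √7))).congr_deriv ?_
  rw [harctan]
  have hx' : H x * 4 + x ≠ 0 := by rwa [mul_comm]
  field_simp
  ring

lemma hasDerivAt_firstIntegral_of_ode {H : ℝ → ℝ} {x : ℝ}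
    (hH : HasDerivAt H (-(H x + x) / (2 * H x)) x) (hH0 : H x ≠ 0) (hx : 4 * H x + x ≠ 0) :
    HasDerivAt (fun y => firstIntegral (H y) y) 0 x := by
  convert hasDerivAt_firstIntegral hH hx using 1
  field_simp
  ring

lemma firstIntegral_eq_of_ode {H : ℝ → ℝ} {a b : ℝ} (ha : 0 ≤ a)
    (hpos : ∀ x ∈ Icc a b, 0 < H x)
    (hode : ∀ x ∈ Icc a b, HasDerivAt H (-(H x + x) / (2 * H x)) x) :
    ∀ x ∈ Icc a b, firstIntegral (H x) x = firstIntegral (H a) a := by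
  have hderiv : ∀ x ∈ Icc a b, HasDerivAt (fun y => firstIntegral (H y) y) 0 x := fun x hx =>
    have := hpos x hx
    have : 0 ≤ x := ha.trans hx.1
    hasDerivAt_firstIntegral_of_ode (hode x hx) (by positivity) (by positivity)
  exact constant_of_has_deriv_right_zero
    (fun x hx => (hderiv x hx).continuousAt.continuousWithinAt)
    (fun x hx => (hderiv x (Ico_subset_Icc_self hx)).hasDerivWithinAt)

lemma firstIntegral_one_zero : firstIntegral 1 0 = 0 := by
  simp [firstIntegral]

lemma firstIntegral_self {L : ℝ} (hL : L ≠ 0) :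
    firstIntegral L L = log (2 * L ^ 2) + (2 / √7) * arctan (√7 / 5) := by
  have h5 : √7 * L / (4 * L + L) = √7 / 5 := by
    field_simp
    ring
  rw [firstIntegral, h5]
  ring_nf

theorem stmt_19 (H : ℝ → ℝ) (L₀ : ℝ) (hL₀ : 0 < L₀)
    (hpos : ∀ L ∈ Set.Icc (0:ℝ) L₀, 0 < H L)
    (hderiv : ∀ L ∈ Set.Icc (0:ℝ) L₀, HasDerivAt H (-(H L + L) / (2 * H L)) L)
    (Q : ℝ → ℝ)
    (hQ : ∀ L, Q L = Real.log ((H L) ^ 2 + (1/2) * L * H L + (1/2) * L ^ 2)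
        + (2 / Real.sqrt 7) * Real.arctan (Real.sqrt 7 * L / (4 * H L + L))) :
    (∀ L₁ ∈ Set.Icc (0:ℝ) L₀, ∀ L₂ ∈ Set.Icc (0:ℝ) L₀, Q L₁ = Q L₂) ∧
    (H 0 = 1 → H L₀ = L₀ →
      Real.log (2 * L₀ ^ 2) = -(2 / Real.sqrt 7) * Real.arctan (Real.sqrt 7 / 5) ∧
      2 * L₀ ^ 2 = Real.exp (-(2 / Real.sqrt 7) * Real.arctan (Real.sqrt 7 / 5))) := by
  have hQ' : ∀ L, Q L = firstIntegral (H L) L := hQ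
  have hconst := firstIntegral_eq_of_ode le_rfl hpos hderiv
  refine ⟨fun L₁ h₁ L₂ h₂ => by rw [hQ', hQ', hconst L₁ h₁, hconst L₂ h₂], fun h0 hL => ?_⟩
  have hend := hconst L₀ (right_mem_Icc.2 hL₀.le)
  rw [hL, h0, firstIntegral_one_zero, firstIntegral_self hL₀.ne'] at hend
  have hlog : log (2 * L₀ ^ 2) = -(2 / √7) * arctan (√7 / 5) := by linarith
  exact ⟨hlog, by rw [← hlog, exp_log (by positivity)]⟩
end
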